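/- Existence of a positive solution for the graph Yamabe-type equation: let D be a finite connected graph domain with nonempty interior and boundary, γ < λ₁ and p > 2. Then there exists u : D → ℝ with u = 0 on ∂D and u(x) > 0 for all x ∈ D°, satisfying −Δ_μ u(x) = γ u(x) + u(x)^{p−1} for every x ∈ D°. -/

import Mathlib

open Finset Filter

noncomputable def gInt {V : Type*} [Fintype V] (mu : V → ℝ) (D : Finset V) (f : V → ℝ) : ℝ :=
  ∑ x ∈ D, mu x * f x

noncomputable def slopeSq {V : Type*} [Fintype V] (w : V → V → ℝ) (mu : V → ℝ)
    (u : V → ℝ) (x : V) : ℝ :=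
  (1 / (2 * mu x)) * ∑ y, w x y * (u y - u x) ^ 2

noncomputable def gammaF {V : Type*} [Fintype V] (w : V → V → ℝ) (mu : V → ℝ)
    (u v : V → ℝ) (x : V) : ℝ :=
  (1 / (2 * mu x)) * ∑ y, w x y * (u y - u x) * (v y - v x)

noncomputable def lapl {V : Type*} [Fintype V] (w : V → V → ℝ) (mu : V → ℝ)
    (u : V → ℝ) (x : V) : ℝ :=
  (1 / mu x) * ∑ y, w x y * (u y - u x)

noncomputable def rayleighSet {V : Type*} [Fintype V] (w : V → V → ℝ) (mu : V → ℝ)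
    (D B : Finset V) : Set ℝ :=
  {r | ∃ u : V → ℝ, (∀ x ∈ B, u x = 0) ∧ (∃ x ∈ D, u x ≠ 0) ∧
    r = gInt mu D (slopeSq w mu u) / gInt mu D (fun x => (u x) ^ 2)}

/-!
On each connected component `C` of the interior `D \ B`, minimize the energy
`J v = ∫_D |∇v|² - γ ∫_D v²` over nonnegative `v` supported in `C` with `∫_D v^p = 1`. This set
is compact, and `γ < λ₁` makes the minimum `m` positive. At a zero `b` of the minimizer `u`,
raising `u(b)` by `t` changes `J` by `-2tμ(b)Δu(b) + O(t²)` and `∫ v^p` only by `O(t^p)`, so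
`Δu(b) ≤ 0`; hence `u` also vanishes at every neighbour of `b`, and by connectedness `u > 0` on `C`.
Two-sided perturbations at a vertex then give `-Δu = γu + m u^(p-1)`, and `m^(1/(p-2)) u` solves
the equation. Distinct components are not adjacent, so these solutions glue together.
-/

open Topology

lemma nonneg_of_forall_pos_mul_add_sq {a b : ℝ} (h : ∀ t > 0, 0 ≤ t * a + t ^ 2 * b) :
    0 ≤ a := by
  have hlim : Tendsto (fun t => a + t * b) (𝓝[>] 0) (𝓝 a) := by
    have : Continuous fun t : ℝ => a + t * b := by fun_prop
    simpa using (this.tendsto 0).mono_left nhdsWithin_le_nhds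
  refine ge_of_tendsto hlim (eventually_nhdsWithin_of_forall fun t (ht : 0 < t) => ?_)
  have := h t ht
  nlinarith

/-- The derivative at `0` of `t ↦ J (u + t δ_x) - m (∫_D (u + t δ_x)^p)^(2/p)` when `u x = y`. -/
lemma hasDerivAt_quadratic_sub_mul_rpow (m a c μ : ℝ) {y p : ℝ} (hy : 0 < y) (hp : p ≠ 0) :
    HasDerivAt (fun t => (m + t * a + t ^ 2 * c) - m * (1 + μ * ((y + t) ^ p - y ^ p)) ^ (2 / p))
      (a - m * (2 * μ * y ^ (p - 1))) 0 := by
  have hquad : HasDerivAt (fun t : ℝ => m + t * a + t ^ 2 * c) a 0 :=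
    ((((hasDerivAt_id' (0 : ℝ)).mul_const a).const_add m).add
      ((hasDerivAt_pow 2 (0 : ℝ)).mul_const c)).congr_deriv (by simp)
  have hpow : HasDerivAt (fun t : ℝ => 1 + μ * ((y + t) ^ p - y ^ p))
      (μ * (p * y ^ (p - 1))) 0 := by
    simpa using ((((hasDerivAt_id (0 : ℝ)).const_add y).rpow_const
      (Or.inl (by simpa using hy.ne'))).sub_const (y ^ p)).const_mul μ |>.const_add 1
  refine (hquad.sub ((hpow.rpow_const (p := 2 / p) (Or.inl (by simp))).const_mul m)).congr_deriv ?_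
  simp only [add_zero, sub_self, mul_zero, Real.one_rpow, mul_one]
  field_simp

section
variable {V : Type*} [Fintype V] {w : V → V → ℝ} {mu : V → ℝ} {D : Finset V}

noncomputable def energy (w : V → V → ℝ) (mu : V → ℝ) (D : Finset V) (gam : ℝ)
    (u : V → ℝ) : ℝ :=
  gInt mu D (slopeSq w mu u) - gam * gInt mu D (fun x => u x ^ 2)

lemma gInt_add (f g : V → ℝ) :
    gInt mu D (fun x => f x + g x) = gInt mu D f + gInt mu D g := by
  simp only [gInt, mul_add, sum_add_distrib]

lemma gInt_const_mul (c : ℝ) (f : V → ℝ) :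
    gInt mu D (fun x => c * f x) = c * gInt mu D f := by
  simp only [gInt, mul_sum, mul_left_comm]

lemma gInt_mono (hmu : ∀ x, 0 < mu x) {f g : V → ℝ} (h : ∀ x ∈ D, f x ≤ g x) :
    gInt mu D f ≤ gInt mu D g :=
  sum_le_sum fun x hx => mul_le_mul_of_nonneg_left (h x hx) (hmu x).le

lemma gInt_nonneg (hmu : ∀ x, 0 < mu x) {f : V → ℝ} (h : ∀ x ∈ D, 0 ≤ f x) :
    0 ≤ gInt mu D f :=
  sum_nonneg fun x hx => mul_nonneg (hmu x).le (h x hx)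

lemma gInt_pos (hmu : ∀ x, 0 < mu x) {f : V → ℝ} (h : ∀ x ∈ D, 0 ≤ f x) {x : V}
    (hx : x ∈ D) (hfx : 0 < f x) : 0 < gInt mu D f :=
  sum_pos' (fun y hy => mul_nonneg (hmu y).le (h y hy)) ⟨x, hx, mul_pos (hmu x) hfx⟩

lemma slopeSq_nonneg (hw : ∀ x y, 0 ≤ w x y) (hmu : ∀ x, 0 < mu x) (u : V → ℝ) (x : V) :
    0 ≤ slopeSq w mu u x :=
  mul_nonneg (by have := hmu x; positivity)
    (sum_nonneg fun y _ => mul_nonneg (hw x y) (sq_nonneg _))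

lemma slopeSq_add_smul (u e : V → ℝ) (t : ℝ) (x : V) :
    slopeSq w mu (u + t • e) x
      = slopeSq w mu u x + 2 * t * gammaF w mu u e x + t ^ 2 * slopeSq w mu e x := by
  simp only [slopeSq, gammaF, Pi.add_apply, Pi.smul_apply, smul_eq_mul, mul_sum,
    ← sum_add_distrib]
  exact sum_congr rfl fun y _ => by ring

lemma slopeSq_smul (s : ℝ) (u : V → ℝ) (x : V) :
    slopeSq w mu (s • u) x = s ^ 2 * slopeSq w mu u x := by
  simp only [slopeSq, Pi.smul_apply, smul_eq_mul, mul_sum]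
  exact sum_congr rfl fun y _ => by ring

lemma lapl_smul (s : ℝ) (u : V → ℝ) (x : V) :
    lapl w mu (s • u) x = s * lapl w mu u x := by
  simp only [lapl, Pi.smul_apply, smul_eq_mul, mul_sum]
  exact sum_congr rfl fun y _ => by ring

lemma lapl_congr {u v : V → ℝ} {x : V} (hx : u x = v x)
    (h : ∀ y, w x y ≠ 0 → u y = v y) : lapl w mu u x = lapl w mu v x := by
  unfold lapl
  congr 1
  refine sum_congr rfl fun y _ => ?_
  by_cases hy : w x y = 0
  · simp [hy]
  · rw [h y hy, hx]

lemma energy_smul (gam s : ℝ) (u : V → ℝ) :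
    energy w mu D gam (s • u) = s ^ 2 * energy w mu D gam u := by
  simp only [energy, funext (slopeSq_smul (w := w) (mu := mu) s u), gInt_const_mul,
    Pi.smul_apply, smul_eq_mul, mul_pow]
  ring

lemma energy_add_smul (gam t : ℝ) (u e : V → ℝ) :
    energy w mu D gam (u + t • e) = energy w mu D gam u
      + 2 * t * (gInt mu D (gammaF w mu u e) - gam * gInt mu D (fun x => u x * e x))
      + t ^ 2 * energy w mu D gam e := by
  have hsq : ∀ x, (u + t • e) x ^ 2 = u x ^ 2 + 2 * t * (u x * e x) + t ^ 2 * e x ^ 2 :=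
    fun x => by simp only [Pi.add_apply, Pi.smul_apply, smul_eq_mul]; ring
  simp only [energy, funext (slopeSq_add_smul (w := w) (mu := mu) u e t), hsq, gInt_add,
    gInt_const_mul]
  ring

lemma continuous_energy (w : V → V → ℝ) (mu : V → ℝ) (D : Finset V) (gam : ℝ) :
    Continuous (energy w mu D gam) := by
  unfold energy gInt slopeSq
  fun_prop

lemma continuous_gInt_rpow (mu : V → ℝ) (D : Finset V) {p : ℝ} (hp : 0 ≤ p) :
    Continuous fun u : V → ℝ => gInt mu D (fun x => u x ^ p) := by
  unfold gInt
  fun_prop (disch := exact hp)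

lemma sInf_rayleighSet_mul_le (hw : ∀ x y, 0 ≤ w x y) (hmu : ∀ x, 0 < mu x) {B : Finset V}
    {u : V → ℝ} (hB : ∀ x ∈ B, u x = 0) (hD : ∃ x ∈ D, u x ≠ 0) :
    sInf (rayleighSet w mu D B) * gInt mu D (fun x => u x ^ 2)
      ≤ gInt mu D (slopeSq w mu u) := by
  obtain ⟨x, hx, hux⟩ := hD
  have hpos : 0 < gInt mu D (fun x => u x ^ 2) :=
    gInt_pos hmu (fun _ _ => sq_nonneg _) hx (by positivity)
  have hbdd : BddBelow (rayleighSet w mu D B) := by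
    refine ⟨0, ?_⟩
    rintro r ⟨v, -, -, rfl⟩
    exact div_nonneg (gInt_nonneg hmu fun x _ => slopeSq_nonneg hw hmu v x)
      (gInt_nonneg hmu fun _ _ => sq_nonneg _)
  rw [← le_div_iff₀ hpos]
  exact csInf_le hbdd ⟨u, hB, ⟨x, hx, hux⟩, rfl⟩

lemma energy_pos_of_lt_sInf (hw : ∀ x y, 0 ≤ w x y) (hmu : ∀ x, 0 < mu x) {B : Finset V}
    {gam : ℝ} (hgam : gam < sInf (rayleighSet w mu D B)) {v : V → ℝ}
    (hB : ∀ x ∈ B, v x = 0) (hD : ∃ x ∈ D, v x ≠ 0) : 0 < energy w mu D gam v := by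
  obtain ⟨x, hx, hvx⟩ := hD
  have hpos : 0 < gInt mu D (fun x => v x ^ 2) :=
    gInt_pos hmu (fun _ _ => sq_nonneg _) hx (by positivity)
  have := sInf_rayleighSet_mul_le hw hmu hB ⟨x, hx, hvx⟩
  unfold energy
  nlinarith

lemma gInt_rpow_pos (hmu : ∀ x, 0 < mu x) {p : ℝ} {v : V → ℝ} (hv : 0 ≤ v) {x : V}
    (hx : x ∈ D) (hvx : 0 < v x) : 0 < gInt mu D (fun x => v x ^ p) :=
  gInt_pos hmu (fun y _ => Real.rpow_nonneg (hv y) p) hx (Real.rpow_pos_of_pos hvx p)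

lemma gInt_rpow_mono (hmu : ∀ x, 0 < mu x) {p : ℝ} (hp : 0 ≤ p) {u v : V → ℝ} (hu : 0 ≤ u)
    (huv : u ≤ v) : gInt mu D (fun x => u x ^ p) ≤ gInt mu D (fun x => v x ^ p) :=
  gInt_mono hmu fun x _ => Real.rpow_le_rpow (hu x) (huv x) hp

lemma gInt_rpow_smul (p : ℝ) {s : ℝ} (hs : 0 ≤ s) {v : V → ℝ} (hv : 0 ≤ v) :
    gInt mu D (fun x => (s • v) x ^ p) = s ^ p * gInt mu D (fun x => v x ^ p) := by
  simp only [Pi.smul_apply, smul_eq_mul, ← gInt_const_mul]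
  unfold gInt
  exact sum_congr rfl fun x _ => by dsimp only; rw [Real.mul_rpow hs (hv x)]

lemma isCompact_setOf_gInt_rpow_eq_one (hmu : ∀ x, 0 < mu x) {C : Finset V} (hCD : C ⊆ D) {p : ℝ}
    (hp : 0 < p) :
    IsCompact {v : V → ℝ | 0 ≤ v ∧ (∀ z ∉ C, v z = 0) ∧ gInt mu D (fun x => v x ^ p) = 1} := by
  refine (isCompact_univ_pi fun z => isCompact_Icc (a := 0) (b := (mu z)⁻¹ ^ p⁻¹))
    |>.of_isClosed_subset ?_ ?_
  · refine (isClosed_le continuous_const continuous_id).inter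
      (IsClosed.inter ?_ (isClosed_eq (continuous_gInt_rpow mu D hp.le) continuous_const))
    show IsClosed {v : V → ℝ | ∀ z ∉ C, v z = 0}
    simp only [Set.ofPred_forall]
    exact isClosed_iInter fun z => isClosed_iInter fun _ =>
      isClosed_eq (continuous_apply z) continuous_const
  · rintro v ⟨hv, hvC, hvN⟩ z -
    refine ⟨hv z, ?_⟩
    by_cases hz : z ∈ C
    · have hterm : mu z * v z ^ p ≤ 1 :=
        hvN ▸ single_le_sum (f := fun x => mu x * v x ^ p)
          (fun x _ => mul_nonneg (hmu x).le (Real.rpow_nonneg (hv x) p)) (hCD hz)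
      rw [Real.le_rpow_inv_iff_of_pos (hv z) (inv_nonneg.mpr (hmu z).le) hp]
      simpa using (le_inv_mul_iff₀ (hmu z) (b := 1)).mpr (by simpa using hterm)
    · rw [hvC z hz]
      exact Real.rpow_nonneg (inv_nonneg.mpr (hmu z).le) _

/-- `u` minimizes `energy v / (∫_D v^p)^(2/p)` over nonnegative `v` supported in `C`, and is
normalized by `∫_D u^p = 1`. -/
structure IsNormalizedMinimizer (w : V → V → ℝ) (mu : V → ℝ) (D C : Finset V) (gam p : ℝ)
    (u : V → ℝ) : Prop where
  nonneg : 0 ≤ u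
  eq_zero_of_notMem : ∀ z ∉ C, u z = 0
  gInt_rpow_eq_one : gInt mu D (fun x => u x ^ p) = 1
  mul_le_energy : ∀ v : V → ℝ, 0 ≤ v → (∀ z ∉ C, v z = 0) →
    0 < gInt mu D (fun x => v x ^ p) →
    energy w mu D gam u * gInt mu D (fun x => v x ^ p) ^ (2 / p) ≤ energy w mu D gam v

structure IsPosSolutionOn (w : V → V → ℝ) (mu : V → ℝ) (C : Finset V) (gam p : ℝ)
    (u : V → ℝ) : Prop where
  eq_zero_of_notMem : ∀ z ∉ C, u z = 0
  pos : ∀ x ∈ C, 0 < u x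
  neg_lapl_eq : ∀ x ∈ C, -lapl w mu u x = gam * u x + u x ^ (p - 1)

namespace IsNormalizedMinimizer
variable {C : Finset V} {gam p : ℝ} {u : V → ℝ}

lemma exists_ne_zero (hu : IsNormalizedMinimizer w mu D C gam p u) (hp : p ≠ 0) :
    ∃ x ∈ C, u x ≠ 0 := by
  by_contra! h
  have hzero : u = 0 := funext fun z => by
    by_cases hz : z ∈ C
    · exact h z hz
    · exact hu.eq_zero_of_notMem z hz
  simpa [hzero, gInt, Real.zero_rpow hp] using hu.gInt_rpow_eq_one

end IsNormalizedMinimizer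

lemma eq_zero_of_neg_lapl_nonneg (hw : ∀ x y, 0 ≤ w x y) (hmu : ∀ x, 0 < mu x)
    {u : V → ℝ} (hu : 0 ≤ u) {b : V} (hub : u b = 0) (hlap : 0 ≤ -lapl w mu u b) {a : V}
    (hba : 0 < w b a) : u a = 0 := by
  have hsum : ∑ y, w b y * u y = 0 := by
    refine le_antisymm ?_ (sum_nonneg fun y _ => mul_nonneg (hw b y) (hu y))
    have := hmu b
    simp only [lapl, hub, sub_zero, neg_nonneg] at hlap
    exact nonpos_of_mul_nonpos_right hlap (one_div_pos.mpr this)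
  have := (sum_eq_zero_iff_of_nonneg fun y _ => mul_nonneg (hw b y) (hu y)).mp hsum a
    (mem_univ a)
  exact (mul_eq_zero.mp this).resolve_left hba.ne'

lemma neg_lapl_smul_eq {gam m p : ℝ} (hm : 0 < m) (hp : 2 < p) {u : V → ℝ} {x : V}
    (hux : 0 < u x) (h : -lapl w mu u x = gam * u x + m * u x ^ (p - 1)) :
    -lapl w mu (m ^ (p - 2)⁻¹ • u) x
      = gam * (m ^ (p - 2)⁻¹ • u) x + (m ^ (p - 2)⁻¹ • u) x ^ (p - 1) := by
  set s := m ^ (p - 2)⁻¹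
  have hs : 0 < s := Real.rpow_pos_of_pos hm _
  have hsp : s ^ (p - 1) = s * m := by
    rw [show p - 1 = 1 + (p - 2) by ring, Real.rpow_add hs, Real.rpow_one,
      ← Real.rpow_mul hm.le, inv_mul_cancel₀ (by linarith), Real.rpow_one]
  simp only [lapl_smul, Pi.smul_apply, smul_eq_mul, Real.mul_rpow hs.le hux.le, hsp]
  linear_combination s * h

end

section
variable {V : Type*} {w : V → V → ℝ} {I : Finset V} {x : V}

def adjWithin (w : V → V → ℝ) (C : Finset V) (a b : V) : Prop :=
  a ∈ C ∧ b ∈ C ∧ 0 < w a b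

open Classical in
noncomputable def component (w : V → V → ℝ) (I : Finset V) (x : V) : Finset V :=
  {y ∈ I | Relation.ReflTransGen (adjWithin w I) x y}

lemma mem_component {y : V} :
    y ∈ component w I x ↔ y ∈ I ∧ Relation.ReflTransGen (adjWithin w I) x y := by
  simp [component]

lemma component_subset : component w I x ⊆ I := fun _ hy => (mem_component.mp hy).1

lemma self_mem_component (hx : x ∈ I) : x ∈ component w I x :=
  mem_component.mpr ⟨hx, .refl⟩

lemma mem_component_of_adj {a b : V} (ha : a ∈ component w I x) (hb : b ∈ I)
    (hab : 0 < w a b) : b ∈ component w I x :=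
  mem_component.mpr ⟨hb, (mem_component.mp ha).2.tail ⟨component_subset ha, hb, hab⟩⟩

lemma reflTransGen_adjWithin_symm (hsymm : ∀ x y, w x y = w y x) {a b : V}
    (h : Relation.ReflTransGen (adjWithin w I) a b) :
    Relation.ReflTransGen (adjWithin w I) b a :=
  haveI : Std.Symm (adjWithin w I) := ⟨fun a b ⟨ha, hb, hab⟩ => ⟨hb, ha, hsymm a b ▸ hab⟩⟩
  Std.Symm.symm _ _ h

lemma component_eq_of_mem (hsymm : ∀ x y, w x y = w y x) {y : V}
    (hy : y ∈ component w I x) : component w I y = component w I x := by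
  have hxy := (mem_component.mp hy).2
  ext z
  simp only [mem_component]
  exact and_congr_right fun _ =>
    ⟨hxy.trans, (reflTransGen_adjWithin_symm hsymm hxy).trans⟩

lemma reflTransGen_adjWithin_component (hsymm : ∀ x y, w x y = w y x) {a b : V}
    (ha : a ∈ component w I x) (hb : b ∈ component w I x) :
    Relation.ReflTransGen (adjWithin w (component w I x)) a b := by
  have hxa := (mem_component.mp ha).2
  have hab : Relation.ReflTransGen (adjWithin w I) a b :=
    (reflTransGen_adjWithin_symm hsymm hxa).trans (mem_component.mp hb).2
  clear hb
  induction hab with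
  | refl => exact .refl
  | @tail c d hac hcd ih =>
    have hc : c ∈ component w I x := mem_component.mpr ⟨hcd.1, hxa.trans hac⟩
    exact ih.tail ⟨hc, mem_component_of_adj hc hcd.2.1 hcd.2.2, hcd.2.2⟩

end

section
variable {V : Type*} [Fintype V] [DecidableEq V] {w : V → V → ℝ} {mu : V → ℝ} {D : Finset V}

lemma gInt_comp_add_smul_single (φ : ℝ → ℝ) (u : V → ℝ) (t : ℝ) {d : V} (hd : d ∈ D) :
    gInt mu D (fun x => φ ((u + t • Pi.single d 1 : V → ℝ) x))
      = gInt mu D (fun x => φ (u x)) + mu d * (φ (u d + t) - φ (u d)) := by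
  unfold gInt
  rw [← add_sum_erase D _ hd, ← add_sum_erase D _ hd]
  have hrest : ∀ x ∈ D.erase d, mu x * φ ((u + t • Pi.single d 1 : V → ℝ) x) = mu x * φ (u x) :=
    fun x hx => by simp [ne_of_mem_erase hx]
  rw [sum_congr rfl hrest]
  simp only [Pi.add_apply, Pi.smul_apply, Pi.single_eq_same, smul_eq_mul, mul_one]
  ring

lemma gInt_mul_single (u : V → ℝ) {d : V} (hd : d ∈ D) :
    gInt mu D (fun x => u x * (Pi.single d 1 : V → ℝ) x) = mu d * u d := by
  simp [gInt, Pi.single_apply, hd]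

lemma gInt_gammaF_single (hsymm : ∀ x y, w x y = w y x) (hmu : ∀ x, 0 < mu x)
    (u : V → ℝ) {d : V} (hd : d ∈ D) (hnbr : ∀ y ∉ D, w d y = 0) :
    gInt mu D (gammaF w mu u (Pi.single d 1)) = -(mu d * lapl w mu u d) := by
  have hterm : ∀ x, mu x * gammaF w mu u (Pi.single d 1) x
      = (w d x * (u d - u x) - (Pi.single d 1 : V → ℝ) x * ∑ y, w x y * (u y - u x)) / 2 := by
    intro x
    have := (hmu x).ne'
    have hsum : ∑ y, w x y * (u y - u x) * ((Pi.single d 1 : V → ℝ) y - (Pi.single d 1 : V → ℝ) x)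
        = w x d * (u d - u x) - (Pi.single d 1 : V → ℝ) x * ∑ y, w x y * (u y - u x) := by
      simp only [mul_sub, sum_sub_distrib, ← sum_mul]
      rw [Fintype.sum_eq_single d fun y hy => by simp [hy], Pi.single_eq_same]
      ring
    rw [gammaF, hsum, hsymm x d]
    field_simp
  have hext : ∑ x ∈ D, w d x * (u d - u x) = -∑ y, w d y * (u y - u d) := by
    rw [sum_subset (subset_univ D) fun x _ hx => by simp [hnbr x hx], ← sum_neg_distrib]
    exact sum_congr rfl fun y _ => by ring
  simp only [gInt, hterm, ← sum_div, sum_sub_distrib, hext]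
  simp only [Pi.single_apply, ite_mul, one_mul, zero_mul, sum_ite_eq', hd, ↓reduceIte]
  rw [lapl, one_div, mul_inv_cancel_left₀ (hmu d).ne']
  ring

lemma energy_add_smul_single (hsymm : ∀ x y, w x y = w y x) (hmu : ∀ x, 0 < mu x)
    (gam t : ℝ) (u : V → ℝ) {d : V} (hd : d ∈ D) (hnbr : ∀ y ∉ D, w d y = 0) :
    energy w mu D gam (u + t • Pi.single d 1) = energy w mu D gam u
      + t * (2 * mu d * (-lapl w mu u d - gam * u d))
      + t ^ 2 * energy w mu D gam (Pi.single d 1) := by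
  rw [energy_add_smul, gInt_gammaF_single hsymm hmu u hd hnbr, gInt_mul_single u hd]
  ring

end

namespace IsNormalizedMinimizer
variable {V : Type*} [Fintype V] [DecidableEq V] {w : V → V → ℝ} {mu : V → ℝ}
  {D C : Finset V} {gam p : ℝ} {u : V → ℝ}

lemma neg_lapl_nonneg_of_eq_zero (hu : IsNormalizedMinimizer w mu D C gam p u)
    (hsymm : ∀ x y, w x y = w y x) (hmu : ∀ x, 0 < mu x) (hp : 0 < p)
    (hm : 0 ≤ energy w mu D gam u) (hCD : C ⊆ D) {b : V} (hb : b ∈ C)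
    (hnbr : ∀ y ∉ D, w b y = 0) (hub : u b = 0) : 0 ≤ -lapl w mu u b := by
  suffices h : 0 ≤ 2 * mu b * (-lapl w mu u b - gam * u b) by
    rw [hub, mul_zero, sub_zero] at h
    exact nonneg_of_mul_nonneg_right h (by linarith [hmu b])
  refine nonneg_of_forall_pos_mul_add_sq (b := energy w mu D gam (Pi.single b 1)) fun t ht => ?_
  set v : V → ℝ := u + t • Pi.single b 1
  have hle : u ≤ v := fun z => by
    by_cases hz : z = b <;> simp [v, hz, ht.le]
  have hv : 0 ≤ v := hu.nonneg.trans hle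
  have hvC : ∀ z ∉ C, v z = 0 := fun z hz => by
    simp [v, hu.eq_zero_of_notMem z hz, show z ≠ b by rintro rfl; exact hz hb]
  have hN : 1 ≤ gInt mu D (fun x => v x ^ p) :=
    hu.gInt_rpow_eq_one ▸ gInt_rpow_mono hmu hp.le hu.nonneg hle
  have hmin := hu.mul_le_energy v hv hvC (by linarith)
  have hgrow : energy w mu D gam u ≤ energy w mu D gam u * gInt mu D (fun x => v x ^ p) ^ (2 / p) :=
    le_mul_of_one_le_right hm (Real.one_le_rpow hN (by positivity))
  rw [energy_add_smul_single hsymm hmu gam t u (hCD hb) hnbr] at hmin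
  linarith

lemma pos (hu : IsNormalizedMinimizer w mu D C gam p u) (hsymm : ∀ x y, w x y = w y x)
    (hw : ∀ x y, 0 ≤ w x y) (hmu : ∀ x, 0 < mu x) (hp : 0 < p)
    (hm : 0 ≤ energy w mu D gam u) (hCD : C ⊆ D) (hnbr : ∀ a ∈ C, ∀ y ∉ D, w a y = 0)
    (hconn : ∀ a ∈ C, ∀ b ∈ C, Relation.ReflTransGen (adjWithin w C) a b) :
    ∀ x ∈ C, 0 < u x := by
  intro x hx
  obtain ⟨y, hy, huy⟩ := hu.exists_ne_zero hp.ne'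
  refine (hu.nonneg x).lt_of_ne' fun hux => huy ?_
  have hzero : ∀ z, Relation.ReflTransGen (adjWithin w C) x z → u z = 0 := by
    intro z hxz
    induction hxz with
    | refl => exact hux
    | tail _ hab ih =>
      exact eq_zero_of_neg_lapl_nonneg hw hmu hu.nonneg ih
        (hu.neg_lapl_nonneg_of_eq_zero hsymm hmu hp hm hCD hab.1 (hnbr _ hab.1) ih) hab.2.2
  exact hzero y (hconn x hx y hy)

lemma neg_lapl_eq (hu : IsNormalizedMinimizer w mu D C gam p u) (hsymm : ∀ x y, w x y = w y x)
    (hmu : ∀ x, 0 < mu x) (hp : 0 < p) (hCD : C ⊆ D) {x : V} (hx : x ∈ C)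
    (hnbr : ∀ y ∉ D, w x y = 0) (hux : 0 < u x) :
    -lapl w mu u x = gam * u x + energy w mu D gam u * u x ^ (p - 1) := by
  set m := energy w mu D gam u
  set a := 2 * mu x * (-lapl w mu u x - gam * u x)
  set c := energy w mu D gam (Pi.single x 1)
  set g : ℝ → ℝ := fun t =>
    (m + t * a + t ^ 2 * c) - m * (1 + mu x * ((u x + t) ^ p - u x ^ p)) ^ (2 / p)
  have hg : ∀ t, g t = energy w mu D gam (u + t • Pi.single x 1)
      - m * gInt mu D (fun z => (u + t • Pi.single x 1 : V → ℝ) z ^ p) ^ (2 / p) := by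
    intro t
    rw [energy_add_smul_single hsymm hmu gam t u (hCD hx) hnbr,
      gInt_comp_add_smul_single (· ^ p) u t (hCD hx), hu.gInt_rpow_eq_one]
  have hg0 : g 0 = 0 := by simp [g]
  have hmin : IsLocalMin g 0 := by
    filter_upwards [Ioo_mem_nhds (neg_lt_zero.mpr hux) hux] with t ht
    have hv : 0 ≤ u + t • Pi.single x 1 := fun z => by
      by_cases hz : z = x
      · simp only [hz, Pi.zero_apply, Pi.add_apply, Pi.smul_apply, Pi.single_eq_same, smul_eq_mul,
          mul_one]
        linarith [ht.1]
      · simpa [hz] using hu.nonneg z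
    have hvC : ∀ z ∉ C, (u + t • Pi.single x 1 : V → ℝ) z = 0 := fun z hz => by
      simp [hu.eq_zero_of_notMem z hz, show z ≠ x by rintro rfl; exact hz hx]
    have hvx : 0 < (u + t • Pi.single x 1 : V → ℝ) x := by
      simp only [Pi.add_apply, Pi.smul_apply, Pi.single_eq_same, smul_eq_mul, mul_one]
      linarith [ht.1]
    have := hu.mul_le_energy _ hv hvC (gInt_rpow_pos hmu hv (hCD hx) hvx)
    rw [hg0, hg t]
    exact sub_nonneg.mpr this
  have := hmin.hasDerivAt_eq_zero (hasDerivAt_quadratic_sub_mul_rpow m a c (mu x) hux hp.ne')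
  have hEL : 2 * mu x * (-lapl w mu u x - gam * u x - m * u x ^ (p - 1)) = 0 := by
    linear_combination this
  have := (mul_eq_zero.mp hEL).resolve_left (by linarith [hmu x])
  linarith

end IsNormalizedMinimizer

section
variable {V : Type*} [Fintype V] [DecidableEq V] {w : V → V → ℝ} {mu : V → ℝ}
  {D C I : Finset V} {gam p : ℝ}

lemma exists_isNormalizedMinimizer (hmu : ∀ x, 0 < mu x) (hp : 0 < p) (hCD : C ⊆ D)
    (hC : C.Nonempty) : ∃ u, IsNormalizedMinimizer w mu D C gam p u := by
  set K := {v : V → ℝ | 0 ≤ v ∧ (∀ z ∉ C, v z = 0) ∧ gInt mu D (fun x => v x ^ p) = 1}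
  have hnormalize : ∀ v : V → ℝ, 0 ≤ v → (∀ z ∉ C, v z = 0) →
      0 < gInt mu D (fun x => v x ^ p) →
      gInt mu D (fun x => v x ^ p) ^ (-p⁻¹) • v ∈ K := by
    intro v hv hvC hN
    have hs := (Real.rpow_pos_of_pos hN (-p⁻¹)).le
    refine ⟨smul_nonneg hs hv, fun z hz => by simp [hvC z hz], ?_⟩
    rw [gInt_rpow_smul p hs hv, ← Real.rpow_mul hN.le, neg_mul, inv_mul_cancel₀ hp.ne',
      Real.rpow_neg_one, inv_mul_cancel₀ hN.ne']
  obtain ⟨x₀, hx₀⟩ := hC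
  have hsingle : (0 : V → ℝ) ≤ Pi.single x₀ 1 := Pi.single_nonneg.mpr zero_le_one
  have hKne : K.Nonempty := ⟨_, hnormalize _ hsingle
    (fun z hz => by simp [show z ≠ x₀ by rintro rfl; exact hz hx₀])
    (gInt_rpow_pos hmu hsingle (hCD hx₀) (by simp))⟩
  obtain ⟨u, ⟨hu, huC, huN⟩, hmin⟩ := (isCompact_setOf_gInt_rpow_eq_one hmu hCD hp).exists_isMinOn hKne
    (continuous_energy w mu D gam).continuousOn
  refine ⟨u, hu, huC, huN, fun v hv hvC hN => ?_⟩
  have hle := hmin (hnormalize v hv hvC hN)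
  rw [Set.mem_ofPred_eq, energy_smul, ← Real.rpow_natCast, ← Real.rpow_mul hN.le] at hle
  calc energy w mu D gam u * gInt mu D (fun x => v x ^ p) ^ (2 / p)
      ≤ gInt mu D (fun x => v x ^ p) ^ (-p⁻¹ * (2 : ℕ)) * energy w mu D gam v
        * gInt mu D (fun x => v x ^ p) ^ (2 / p) :=
        mul_le_mul_of_nonneg_right hle (Real.rpow_nonneg hN.le _)
    _ = energy w mu D gam v := by
        rw [mul_right_comm, ← Real.rpow_add hN,
          show -p⁻¹ * ((2 : ℕ) : ℝ) + 2 / p = 0 by push_cast; ring, Real.rpow_zero, one_mul]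

theorem exists_isPosSolutionOn (hsymm : ∀ x y, w x y = w y x) (hw : ∀ x y, 0 ≤ w x y)
    (hmu : ∀ x, 0 < mu x) (hp : 2 < p) (hCD : C ⊆ D) (hC : C.Nonempty)
    (hnbr : ∀ a ∈ C, ∀ y ∉ D, w a y = 0)
    (hconn : ∀ a ∈ C, ∀ b ∈ C, Relation.ReflTransGen (adjWithin w C) a b)
    (hcoer : ∀ v : V → ℝ, (∀ z ∉ C, v z = 0) → v ≠ 0 → 0 < energy w mu D gam v) :
    ∃ u, IsPosSolutionOn w mu C gam p u := by
  have hp0 : 0 < p := by linarith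
  obtain ⟨u, hu⟩ := exists_isNormalizedMinimizer (w := w) (gam := gam) hmu hp0 hCD hC
  have hm : 0 < energy w mu D gam u := hcoer u hu.eq_zero_of_notMem fun h => by
    obtain ⟨x, -, hx⟩ := hu.exists_ne_zero hp0.ne'
    exact hx (congrFun h x)
  have hpos := hu.pos hsymm hw hmu hp0 hm.le hCD hnbr hconn
  refine ⟨energy w mu D gam u ^ (p - 2)⁻¹ • u, fun z hz => by simp [hu.eq_zero_of_notMem z hz],
    fun x hx => ?_, fun x hx => ?_⟩
  · exact mul_pos (Real.rpow_pos_of_pos hm _) (hpos x hx)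
  · exact neg_lapl_smul_eq hm hp (hpos x hx)
      (hu.neg_lapl_eq hsymm hmu hp0 hCD hx (hnbr x hx) (hpos x hx))

lemma exists_isPosSolutionOn_of_components (hsymm : ∀ x y, w x y = w y x)
    (hw : ∀ x y, 0 ≤ w x y)
    (h : ∀ x ∈ I, ∃ u, IsPosSolutionOn w mu (component w I x) gam p u) :
    ∃ u, IsPosSolutionOn w mu I gam p u := by
  have hsol : ∀ C : Finset V, ∃ u : V → ℝ,
      ∀ x ∈ I, component w I x = C → IsPosSolutionOn w mu C gam p u := by
    intro C
    by_cases hC : ∃ x ∈ I, component w I x = C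
    · obtain ⟨x, hx, rfl⟩ := hC
      obtain ⟨u, hu⟩ := h x hx
      exact ⟨u, fun y _ hy => hy ▸ hu⟩
    · push Not at hC
      exact ⟨0, fun x hx hxC => absurd hxC (hC x hx)⟩
  -- one solution per component, so that neighbouring vertices read the same function
  choose sol hsol using hsol
  set u : V → ℝ := fun z => if z ∈ I then sol (component w I z) z else 0
  have hagree : ∀ x ∈ I, ∀ y, (y = x ∨ 0 < w x y) → u y = sol (component w I x) y := by
    intro x hx y hy
    by_cases hyI : y ∈ I
    · have hyx : y ∈ component w I x := by
        rcases hy with rfl | hxy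
        · exact self_mem_component hyI
        · exact mem_component_of_adj (self_mem_component hx) hyI hxy
      simp [u, hyI, component_eq_of_mem hsymm hyx]
    · simp [u, hyI, (hsol _ x hx rfl).eq_zero_of_notMem y fun h => hyI (component_subset h)]
  refine ⟨u, fun z hz => by simp [u, hz], fun x hx => ?_, fun x hx => ?_⟩
  · rw [hagree x hx x (Or.inl rfl)]
    exact (hsol _ x hx rfl).pos x (self_mem_component hx)
  · rw [lapl_congr (hagree x hx x (Or.inl rfl))
      fun y hy => hagree x hx y (Or.inr ((hw x y).lt_of_ne' hy)), hagree x hx x (Or.inl rfl)]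
    exact (hsol _ x hx rfl).neg_lapl_eq x (self_mem_component hx)

end

theorem stmt_15_general {V : Type*} [Fintype V] [DecidableEq V]
    (w : V → V → ℝ) (hsymm : ∀ x y, w x y = w y x)
    (hnonneg : ∀ x y, 0 ≤ w x y)
    (mu : V → ℝ) (hmu : ∀ x, 0 < mu x)
    (D B : Finset V)
    (hbdry : ∀ x ∈ D, (x ∈ B ↔ ∃ y, y ∉ D ∧ 0 < w x y))
    (lam1 : ℝ) (hlam1 : lam1 = sInf (rayleighSet w mu D B))
    (gam p : ℝ) (hgam : gam < lam1) (hp : 2 < p) :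
    ∃ u : V → ℝ, (∀ x ∈ B, u x = 0) ∧ (∀ x ∈ D \ B, 0 < u x) ∧
      ∀ x ∈ D \ B, -(lapl w mu u x) = gam * u x + (u x) ^ (p - 1) := by
  set I := D \ B
  have hnbr : ∀ a ∈ I, ∀ y ∉ D, w a y = 0 := fun a ha y hy =>
    le_antisymm (not_lt.mp fun h => (mem_sdiff.mp ha).2 ((hbdry a (mem_sdiff.mp ha).1).mpr
      ⟨y, hy, h⟩)) (hnonneg a y)
  have hcoer : ∀ v : V → ℝ, (∀ z ∉ I, v z = 0) → v ≠ 0 → 0 < energy w mu D gam v := by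
    intro v hv hv0
    obtain ⟨x, hx⟩ := Function.ne_iff.mp hv0
    have hxI : x ∈ I := by_contra fun h => hx (hv x h)
    exact energy_pos_of_lt_sInf hnonneg hmu (hlam1 ▸ hgam)
      (fun z hz => hv z fun h => (mem_sdiff.mp h).2 hz) ⟨x, (mem_sdiff.mp hxI).1, hx⟩
  obtain ⟨u, hu⟩ := exists_isPosSolutionOn_of_components hsymm hnonneg fun x hx =>
    exists_isPosSolutionOn hsymm hnonneg hmu hp (component_subset.trans sdiff_subset)
      ⟨x, self_mem_component hx⟩ (fun a ha => hnbr a (component_subset ha))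
      (fun a ha b hb => reflTransGen_adjWithin_component hsymm ha hb)
      (fun v hv => hcoer v fun z hz => hv z fun h => hz (component_subset h))
  exact ⟨u, fun x hx => hu.eq_zero_of_notMem x fun h => (mem_sdiff.mp h).2 hx, hu.pos,
    hu.neg_lapl_eq⟩

theorem stmt_15 {V : Type*} [Fintype V] [DecidableEq V]
    (w : V → V → ℝ) (hsymm : ∀ x y, w x y = w y x)
    (hnonneg : ∀ x y, 0 ≤ w x y) (hdiag : ∀ x, w x x = 0)
    (mu : V → ℝ) (hmu : ∀ x, 0 < mu x)
    (D B : Finset V) (hBD : B ⊆ D)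
    (hbdry : ∀ x ∈ D, (x ∈ B ↔ ∃ y, y ∉ D ∧ 0 < w x y))
    (hBne : B.Nonempty) (hIne : (D \ B).Nonempty)
    (hconn : ∀ x ∈ D, ∀ y ∈ D,
      Relation.ReflTransGen (fun a b => a ∈ D ∧ b ∈ D ∧ 0 < w a b) x y)
    (lam1 : ℝ) (hlam1 : lam1 = sInf (rayleighSet w mu D B)) (hlam1pos : 0 < lam1)
    (gam p : ℝ) (hgam : gam < lam1) (hp : 2 < p) :
    ∃ u : V → ℝ, (∀ x ∈ B, u x = 0) ∧ (∀ x ∈ D \ B, 0 < u x) ∧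
      ∀ x ∈ D \ B, -(lapl w mu u x) = gam * u x + (u x) ^ (p - 1) :=
  stmt_15_general w hsymm hnonneg mu hmu D B hbdry lam1 hlam1 gam p hgam hp
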